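/- With the DeepSeek step-size ε_k^(n) = u/|L − A_k^(n)| (equivalently p_k^(n+1) = p_k^(n) + u·sign(L − A_k^(n))) for u > 0, the change in the Lagrangian over one iteration satisfies exactly: 𝓛(x^(n+1), p^(n+1)) − 𝓛(x^(n), p^(n)) = ∑_{i=1}^T b^(n+1)(i) − u ∑_{k=1}^E |A_k^(n) − L|. -/
import Mathlib

open Finset

noncomputable section

/-- Load of expert `k` at iteration `n`: the number of tokens assigned to expert `k`. -/
def load {T E : ℕ} (α : ℕ → Fin T → Fin E) (n : ℕ) (k : Fin E) : ℕ :=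
  (Finset.univ.filter fun i => α n i = k).card

/-- The target (perfectly balanced) load `L = T / E` (sparsity `K = 1`). -/
def targetLoad (T E : ℕ) : ℝ := (T : ℝ) / (E : ℝ)

/-- The Lagrangian `𝓛(x⁽ⁿ⁾, p⁽ⁿ⁾) = ∑ᵢ (γ_{i α_n(i)} + p_{α_n(i)}⁽ⁿ⁾) - L ∑ₖ pₖ⁽ⁿ⁾`. -/
def lagrangian {T E : ℕ} (γ : Fin T → Fin E → ℝ) (p : ℕ → Fin E → ℝ)
    (α : ℕ → Fin T → Fin E) (n : ℕ) : ℝ :=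
  (∑ i, (γ i (α n i) + p n (α n i))) - targetLoad T E * ∑ k, p n k

/-- The switching benefit `b⁽ⁿ⁺¹⁾(i)`. -/
def benefit {T E : ℕ} (γ : Fin T → Fin E → ℝ) (p : ℕ → Fin E → ℝ)
    (α : ℕ → Fin T → Fin E) (n : ℕ) (i : Fin T) : ℝ :=
  (γ i (α (n+1) i) + p (n+1) (α (n+1) i)) - (γ i (α n i) + p (n+1) (α n i))

lemma sum_comp_load {T E : ℕ} (α : ℕ → Fin T → Fin E) (n : ℕ) (f : Fin E → ℝ) :
    ∑ i, f (α n i) = ∑ k, (load α n k : ℝ) * f k := by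
  classical
  rw [← Finset.sum_fiberwise (g := fun i => α n i) (s := Finset.univ) (f := fun i => f (α n i))]
  refine Finset.sum_congr rfl fun k _ => ?_
  rw [Finset.sum_congr rfl (fun i hi => by
        rw [(Finset.mem_filter.mp hi).2]),
      Finset.sum_const, load, nsmul_eq_mul]

lemma sign_key (x u : ℝ) : x * (u * Real.sign (-x)) = -(u * |x|) := by
  rcases lt_trichotomy x 0 with h | h | h
  · rw [Real.sign_of_pos (by linarith), abs_of_neg h]; ring
  · simp [h]
  · rw [Real.sign_of_neg (by linarith), abs_of_pos h]; ring

/-- **Corollary (DeepSeek Lagrangian).** With the DeepSeek step-size, the Lagrangian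
change over one iteration equals
`∑ᵢ b⁽ⁿ⁺¹⁾(i) - u ∑ₖ |Aₖ⁽ⁿ⁾ - L|`. -/
theorem deepseek_lagrangian_change (T E : ℕ) (hE : 0 < E) (hdvd : E ∣ T)
    (γ : Fin T → Fin E → ℝ) (p : ℕ → Fin E → ℝ) (α : ℕ → Fin T → Fin E)
    (u : ℝ) (hu : 0 < u)
    -- no ties in bias-shifted scores: at every iteration each token has a unique argmax
    (hargmax : ∀ n (i : Fin T) (k : Fin E), k ≠ α n i →
      γ i k + p n k < γ i (α n i) + p n (α n i))
    -- DeepSeek dual update: `pₖ⁽ⁿ⁺¹⁾ = pₖ⁽ⁿ⁾ + u · sign(L - Aₖ⁽ⁿ⁾)`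
    (hdual : ∀ n (k : Fin E),
      p (n+1) k = p n k + u * Real.sign (targetLoad T E - (load α n k : ℝ)))
    (n : ℕ) :
    lagrangian γ p α (n+1) - lagrangian γ p α n
      = (∑ i, benefit γ p α n i)
        - u * ∑ k, |(load α n k : ℝ) - targetLoad T E| := by
  have hdiff : ∀ k, p (n+1) k - p n k
      = u * Real.sign (-(((load α n k : ℝ)) - targetLoad T E)) := by
    intro k; rw [hdual n k]; ring_nf
  have h1 : lagrangian γ p α (n+1) - lagrangian γ p α n - ∑ i, benefit γ p α n i
      = (∑ k, (load α n k : ℝ) * (p (n+1) k - p n k))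
        - targetLoad T E * ∑ k, (p (n+1) k - p n k) := by
    rw [← sum_comp_load α n (fun k => p (n+1) k - p n k)]
    simp only [lagrangian, benefit, Finset.mul_sum, mul_sub, Finset.sum_add_distrib,
      Finset.sum_sub_distrib]
    ring
  have h2 : (∑ k, (load α n k : ℝ) * (p (n+1) k - p n k))
        - targetLoad T E * ∑ k, (p (n+1) k - p n k)
      = - (u * ∑ k, |(load α n k : ℝ) - targetLoad T E|) := by
    rw [Finset.mul_sum, ← Finset.sum_sub_distrib, Finset.mul_sum, ← Finset.sum_neg_distrib]
    refine Finset.sum_congr rfl fun k _ => ?_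
    rw [hdiff k, ← sub_mul, sign_key]
  linarith [h1, h2]
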